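/- Let r ∈ ℕ, 1 < p < ∞, q = p/(p−1), β ≥ 0, 0 < γ < β + 1/p, and let ω be a function of modulus-of-continuity type. Then {∫_{π/(r(n+1))}^{π/r} (ω(t) t^γ / (t² |sin(rt/2)|^β))^q dt}^{1/q} = O((n+1)^{1−γ+β+1/p} ω(π/(n+1))), with a constant depending only on r, p, q, β, γ (not on n or ω beyond these). -/

import Mathlib

/-!
Write δ = π/(n+1). Subadditivity and monotonicity give ω(t) ≤ (t/δ + 1) ω(δ), and since
t ≥ δ/r on the range of integration this is at most 2r(t/δ) ω(δ); Jordan's inequality gives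
|sin(rt/2)| ≥ rt/π. So the integrand is at most a constant times (n+1) ω(δ) t^(γ-1-β).
As γ < β + 1/p means (γ-1-β)q < -1, the q-th power of this bound is integrable on
(π/(r(n+1)), ∞), and its integral there is explicit and of order (n+1)^(q(β-γ+1/p)).
-/

open Real

noncomputable section

/-- `ω` is a function of modulus-of-continuity type on `[0, 2π]`. -/
def ModulusType (ω : ℝ → ℝ) : Prop :=
  ContinuousOn ω (Set.Icc 0 (2 * π)) ∧ MonotoneOn ω (Set.Icc 0 (2 * π)) ∧ ω 0 = 0 ∧
    ∀ δ₁ δ₂ : ℝ, 0 ≤ δ₁ → δ₁ ≤ δ₂ → δ₁ + δ₂ ≤ 2 * π → ω (δ₁ + δ₂) ≤ ω δ₁ + ω δ₂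

open Set MeasureTheory

namespace ModulusType

variable {ω : ℝ → ℝ} (hω : ModulusType ω)
include hω

lemma nonneg {δ : ℝ} (h0 : 0 ≤ δ) (h2 : δ ≤ 2 * π) : 0 ≤ ω δ :=
  hω.2.2.1 ▸ hω.2.1 ⟨le_rfl, by positivity⟩ ⟨h0, h2⟩ h0

lemma add_le {x y : ℝ} (hx : 0 ≤ x) (hy : 0 ≤ y) (hxy : x + y ≤ 2 * π) :
    ω (x + y) ≤ ω x + ω y := by
  rcases le_total x y with h | h
  · exact hω.2.2.2 x y hx h hxy
  · rw [add_comm x, add_comm (ω x)]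
    exact hω.2.2.2 y x hy h (by linarith)

lemma natCast_mul_le {δ : ℝ} (hδ : 0 ≤ δ) (m : ℕ) (hm : (m : ℝ) * δ ≤ 2 * π) :
    ω (m * δ) ≤ m * ω δ := by
  induction m with
  | zero => simp [hω.2.2.1]
  | succ k ih =>
    push_cast at hm ⊢
    have hk : (k : ℝ) * δ ≤ 2 * π := by nlinarith
    calc ω ((k + 1) * δ) = ω (k * δ + δ) := by ring_nf
      _ ≤ ω (k * δ) + ω δ := hω.add_le (by positivity) hδ (by linarith)
      _ ≤ (k + 1) * ω δ := by linarith [ih hk]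

lemma le_div_add_one_mul {δ t : ℝ} (hδ : 0 < δ) (ht : 0 ≤ t) (htδ : t + δ ≤ 2 * π) :
    ω t ≤ (t / δ + 1) * ω δ := by
  set m := ⌈t / δ⌉₊
  have htm : t ≤ m * δ := (div_le_iff₀ hδ).mp (Nat.le_ceil _)
  have hm : (m : ℝ) < t / δ + 1 := Nat.ceil_lt_add_one (by positivity)
  have hmδ : (m : ℝ) * δ ≤ t + δ :=
    calc (m : ℝ) * δ ≤ (t / δ + 1) * δ := by gcongr
      _ = t + δ := by field_simp
  calc ω t ≤ ω (m * δ) := hω.2.1 ⟨ht, by linarith⟩ ⟨by positivity, by linarith⟩ htm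
    _ ≤ m * ω δ := hω.natCast_mul_le hδ.le m (by linarith)
    _ ≤ (t / δ + 1) * ω δ := by gcongr; exact hω.nonneg hδ.le (by linarith)

end ModulusType

lemma setIntegral_Ioc_rpow_le {a b e : ℝ} (ha : 0 < a) (he : e < -1) :
    ∫ t in Ioc a b, t ^ e ≤ a ^ (e + 1) / -(e + 1) := by
  have hint := integrableOn_Ioi_rpow_of_lt he ha
  calc ∫ t in Ioc a b, t ^ e ≤ ∫ t in Ioi a, t ^ e :=
        setIntegral_mono_set hint
          ((ae_restrict_iff' measurableSet_Ioi).mpr (ae_of_all _ fun t ht ↦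
            rpow_nonneg (ha.trans ht).le e))
          Ioc_subset_Ioi_self.eventuallyLE
    _ = a ^ (e + 1) / -(e + 1) := by rw [integral_Ioi_rpow_of_lt he ha, div_neg, neg_div]

lemma rpow_intervalIntegral_rpow_le_of_le_mul_rpow {f : ℝ → ℝ} {a b K s q : ℝ} (ha : 0 < a)
    (hab : a ≤ b) (hK : 0 ≤ K) (hq : 0 < q) (hsq : s * q < -1)
    (hf₀ : ∀ t ∈ Icc a b, 0 ≤ f t) (hf : ∀ t ∈ Icc a b, f t ≤ K * t ^ s) :
    (∫ t in a..b, f t ^ q) ^ (1 / q) ≤ K * a ^ (s + 1 / q) * (-(s * q + 1))⁻¹ ^ (1 / q) := by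
  have hpow : ∀ t ∈ Icc a b, f t ^ q ≤ K ^ q * t ^ (s * q) := fun t ht ↦ by
    have ht₀ : 0 ≤ t := ha.le.trans ht.1
    calc f t ^ q ≤ (K * t ^ s) ^ q := rpow_le_rpow (hf₀ t ht) (hf t ht) hq.le
      _ = K ^ q * t ^ (s * q) := by rw [mul_rpow hK (rpow_nonneg ht₀ s), ← rpow_mul ht₀]
  have hint : ∫ t in a..b, f t ^ q ≤ K ^ q * (a ^ (s * q + 1) / -(s * q + 1)) := by
    rw [intervalIntegral.integral_of_le hab]
    calc ∫ t in Ioc a b, f t ^ q ≤ ∫ t in Ioc a b, K ^ q * t ^ (s * q) :=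
          setIntegral_mono_of_nonneg (fun t ht ↦ rpow_nonneg (hf₀ t (Ioc_subset_Icc_self ht)) q)
            (fun t ht ↦ hpow t (Ioc_subset_Icc_self ht))
            ((integrableOn_Ioi_rpow_of_lt hsq ha).mono_set Ioc_subset_Ioi_self |>.const_mul _)
      _ ≤ K ^ q * (a ^ (s * q + 1) / -(s * q + 1)) := by
          rw [integral_const_mul]
          exact mul_le_mul_of_nonneg_left (setIntegral_Ioc_rpow_le ha hsq) (by positivity)
  have hpos : 0 < -(s * q + 1) := by linarith
  calc (∫ t in a..b, f t ^ q) ^ (1 / q)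
      ≤ (K ^ q * (a ^ (s * q + 1) / -(s * q + 1))) ^ (1 / q) :=
        rpow_le_rpow (intervalIntegral.integral_nonneg hab fun t ht ↦ rpow_nonneg (hf₀ t ht) q)
          hint (by positivity)
    _ = K * a ^ (s + 1 / q) * (-(s * q + 1))⁻¹ ^ (1 / q) := by
        have hinv := (inv_pos.mpr hpos).le
        rw [div_eq_mul_inv, mul_rpow (by positivity) (mul_nonneg (by positivity) hinv),
          mul_rpow (by positivity) hinv, ← rpow_mul hK, ← rpow_mul ha.le,
          mul_one_div_cancel hq.ne', rpow_one, ← mul_assoc]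
        congr 3
        field_simp

lemma div_pi_le_sin_half {x : ℝ} (hx₀ : 0 ≤ x) (hxπ : x ≤ π) : x / π ≤ sin (x / 2) := by
  have := mul_le_sin (x := x / 2) (by positivity) (by linarith)
  rwa [show 2 / π * (x / 2) = x / π by ring] at this

lemma ModulusType.mul_rpow_div_sin_rpow_le {ω : ℝ → ℝ} (hω : ModulusType ω) {r : ℕ}
    (hr : 1 ≤ r) {β : ℝ} (hβ : 0 ≤ β) (γ : ℝ) (n : ℕ) {t : ℝ}
    (ht : t ∈ Icc (π / (r * (n + 1))) (π / r)) :
    ω t * t ^ γ / (t ^ 2 * |sin (r * t / 2)| ^ β) ≤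
      2 * r * (n + 1) / π * (π / r) ^ β * ω (π / (n + 1)) * t ^ (γ - 1 - β) := by
  have hr₁ : (1 : ℝ) ≤ r := by exact_mod_cast hr
  have hr₀ : (0 : ℝ) < r := by linarith
  have hn₀ : (0 : ℝ) < n + 1 := by positivity
  have ht₀ : 0 < t := lt_of_lt_of_le (by positivity) ht.1
  have hrt : 1 ≤ r * t * (n + 1) / π := by
    rw [le_div_iff₀ pi_pos, one_mul]
    linarith [(div_le_iff₀ (by positivity)).mp ht.1]
  have hrtπ : r * t ≤ π := by
    have := ht.2; rwa [le_div_iff₀ hr₀, mul_comm] at this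
  have htπ : t ≤ π := by nlinarith [mul_le_mul_of_nonneg_right hr₁ ht₀.le]
  have hδπ : π / (n + 1) ≤ π := div_le_self pi_pos.le (by linarith)
  have hωδ : 0 ≤ ω (π / (n + 1)) := hω.nonneg (by positivity) (by linarith)
  have hωt : ω t ≤ 2 * r * (n + 1) / π * t * ω (π / (n + 1)) := by
    refine (hω.le_div_add_one_mul (δ := π / (n + 1)) (by positivity) ht₀.le (by linarith)).trans ?_
    gcongr
    calc t / (π / (n + 1)) + 1 = t * (n + 1) / π + 1 := by rw [div_div_eq_mul_div]
      _ ≤ r * t * (n + 1) / π + r * t * (n + 1) / π := by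
          gcongr; nlinarith [mul_le_mul_of_nonneg_right hr₁ ht₀.le]
      _ = 2 * r * (n + 1) / π * t := by ring
  have hsin : r * t / π ≤ |sin (r * t / 2)| :=
    (div_pi_le_sin_half (by positivity) hrtπ).trans (le_abs_self _)
  calc ω t * t ^ γ / (t ^ 2 * |sin (r * t / 2)| ^ β)
      ≤ 2 * r * (n + 1) / π * t * ω (π / (n + 1)) * t ^ γ / (t ^ 2 * (r * t / π) ^ β) := by
        gcongr
    _ = 2 * r * (n + 1) / π * (π / r) ^ β * ω (π / (n + 1)) * t ^ (γ - 1 - β) := by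
        rw [div_rpow (by positivity) pi_pos.le, mul_rpow hr₀.le ht₀.le,
          div_rpow pi_pos.le hr₀.le, rpow_sub ht₀, rpow_sub ht₀, rpow_one]
        field_simp

theorem key_integral_estimate_general (r : ℕ) (hr : 1 ≤ r) (p q β γ : ℝ) (hp : 1 < p)
    (hq : q = p / (p - 1)) (hβ : 0 ≤ β) (hγ : γ < β + 1 / p) :
    ∃ C : ℝ, ∀ ω : ℝ → ℝ, ModulusType ω → ∀ n : ℕ,
      (∫ t in (π / (r * ((n : ℝ) + 1)))..(π / r),
          (ω t * t ^ γ / (t ^ 2 * |Real.sin (r * t / 2)| ^ β)) ^ q) ^ (1 / q)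
        ≤ C * (((n : ℝ) + 1) ^ (1 - γ + β + 1 / p) * ω (π / ((n : ℝ) + 1))) := by
  have hq₀ : 0 < q := hq ▸ div_pos (by linarith) (by linarith)
  have hq_inv : 1 / q = 1 - 1 / p := by rw [hq]; field_simp
  have hsq : (γ - 1 - β) * q < -1 := by
    calc (γ - 1 - β) * q < -(1 / q) * q := mul_lt_mul_of_pos_right (by linarith) hq₀
      _ = -1 := by field_simp
  refine ⟨2 * r / π * (π / r) ^ β * (π / r) ^ (γ - β - 1 / p) *
    (-((γ - 1 - β) * q + 1))⁻¹ ^ (1 / q), fun ω hω n ↦ ?_⟩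
  have hr₁ : (1 : ℝ) ≤ r := by exact_mod_cast hr
  have hn₀ : (0 : ℝ) < n + 1 := by positivity
  have hωδ : 0 ≤ ω (π / (n + 1)) :=
    hω.nonneg (by positivity) ((div_le_self pi_pos.le (by simp)).trans (by linarith [pi_pos]))
  have hf₀ : ∀ t ∈ Icc (π / (r * (n + 1))) (π / r),
      0 ≤ ω t * t ^ γ / (t ^ 2 * |sin (r * t / 2)| ^ β) := fun t ht ↦ by
    have ht₀ : 0 ≤ t := (by positivity : 0 ≤ π / (r * (n + 1))).trans ht.1
    have htπ : t ≤ 2 * π := ht.2.trans ((div_le_self pi_pos.le hr₁).trans (by linarith [pi_pos]))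
    exact div_nonneg (mul_nonneg (hω.nonneg ht₀ htπ) (rpow_nonneg ht₀ γ)) (by positivity)
  calc _ ≤ 2 * r * (n + 1) / π * (π / r) ^ β * ω (π / (n + 1)) *
        (π / (r * (n + 1))) ^ (γ - 1 - β + 1 / q) * (-((γ - 1 - β) * q + 1))⁻¹ ^ (1 / q) :=
        rpow_intervalIntegral_rpow_le_of_le_mul_rpow (by positivity)
          (div_le_div_of_nonneg_left pi_pos.le (by positivity) (by nlinarith)) (by positivity)
          hq₀ hsq hf₀ fun t ht ↦ hω.mul_rpow_div_sin_rpow_le hr hβ γ n ht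
    _ = _ := by
        rw [hq_inv, show γ - 1 - β + (1 - 1 / p) = γ - β - 1 / p by ring,
          show (1 : ℝ) - γ + β + 1 / p = 1 - (γ - β - 1 / p) by ring, ← div_div,
          div_rpow (by positivity) hn₀.le, rpow_sub hn₀ 1, rpow_one]
        field_simp

/-- The key integral estimate used in the proofs of Theorems 1–3, with a constant
depending only on `r, p, q, β, γ` and not on `n` or `ω`. -/
theorem key_integral_estimate (r : ℕ) (hr : 1 ≤ r) (p q β γ : ℝ) (hp : 1 < p)
    (hq : q = p / (p - 1)) (hβ : 0 ≤ β) (hγ0 : 0 < γ) (hγ : γ < β + 1 / p) :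
    ∃ C : ℝ, ∀ ω : ℝ → ℝ, ModulusType ω → ∀ n : ℕ,
      (∫ t in (π / (r * ((n : ℝ) + 1)))..(π / r),
          (ω t * t ^ γ / (t ^ 2 * |Real.sin (r * t / 2)| ^ β)) ^ q) ^ (1 / q)
        ≤ C * (((n : ℝ) + 1) ^ (1 - γ + β + 1 / p) * ω (π / ((n : ℝ) + 1))) :=
  key_integral_estimate_general r hr p q β γ hp hq hβ hγ
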